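/- arXiv:1812.11518 — 2 statements merged into one kernel-verified Lean document; each statement's English description precedes it below -/
import Mathlib

section
/- Let R be an integral domain and let y : ℕ → R be a sequence whose first term y(0) is a unit of R. Then there exists a unique sequence x : ℕ → R such that 𝔄(x) = y, and this x satisfies x(0) = y(0) (in particular x(0) is a unit). Hence the autonomous operator restricts to a bijection of the set of sequences with unit first term onto itself. -/
/-- Binomial (Hurwitz) convolution of sequences: `(y ⊛ z)(n) = ∑ (n choose k) y(k) z(n-k)`. -/
def hconv {R : Type*} [CommRing R] (y z : ℕ → R) : ℕ → R :=
  fun n => ∑ k ∈ Finset.range (n + 1), (n.choose k : R) * y k * z (n - k)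

/-- `DSeq x m` is `D_{m+1}(x)`, where `D_1(x) = x` and `D_{m+1}(x) = x ⊛ σ(D_m(x))`. -/
def DSeq {R : Type*} [CommRing R] (x : ℕ → R) : ℕ → ℕ → R
  | 0 => x
  | m + 1 => hconv x (fun j => DSeq x m (j + 1))

/-- `autPoly x n` is the `n`-th autonomous polynomial `A_n(x) = D_n(x)(0)`, meaningful for
`n ≥ 1`. -/
def autPoly {R : Type*} [CommRing R] (x : ℕ → R) (n : ℕ) : R := DSeq x (n - 1) 0

/-- The autonomous operator `𝔄(x)(n) = A_{n+1}(x)`. -/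
def autOp {R : Type*} [CommRing R] (x : ℕ → R) (n : ℕ) : R := autPoly x (n + 1)

lemma DSeq_congr {R : Type*} [CommRing R] (m : ℕ) :
    ∀ (n : ℕ) (x x' : ℕ → R), (∀ i ≤ m + n, x i = x' i) → DSeq x m n = DSeq x' m n := by
  induction m with
  | zero => intro n x x' h; exact h n (by omega)
  | succ m ih =>
    intro n x x' h
    simp only [DSeq, hconv]
    refine Finset.sum_congr rfl fun k hk => ?_
    simp only [Finset.mem_range] at hk
    rw [h k (by omega), ih (n - k + 1) x x' (fun i hi => h i (by omega))]

lemma DSeq_sub {R : Type*} [CommRing R] (m : ℕ) :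
    ∀ (n : ℕ) (x x' : ℕ → R), (∀ i < m + n, x i = x' i) →
      DSeq x m n - DSeq x' m n = (x 0) ^ m * (x (m + n) - x' (m + n)) := by
  induction m with
  | zero => intro n x x' h; simp [DSeq]
  | succ m ih =>
    intro n x x' h
    simp only [DSeq, hconv]
    rw [Finset.sum_range_succ', Finset.sum_range_succ']
    have htail : ∀ i ∈ Finset.range n,
        (n.choose (i+1) : R) * x (i+1) * DSeq x m (n - (i+1) + 1)
          = (n.choose (i+1) : R) * x' (i+1) * DSeq x' m (n - (i+1) + 1) := by
      intro i hi
      simp only [Finset.mem_range] at hi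
      rw [h (i+1) (by omega),
        DSeq_congr m (n - (i+1) + 1) x x' (fun j hj => h j (by omega))]
    rw [Finset.sum_congr rfl htail]
    have h0 : x 0 = x' 0 := h 0 (by omega)
    have hd := ih (n + 1) x x' (fun i hi => h i (by omega))
    have : m + (n + 1) = m + 1 + n := by omega
    rw [this] at hd
    simp only [Nat.choose_zero_right, Nat.cast_one, one_mul, Nat.sub_zero]
    rw [← h0]
    linear_combination (x 0) * hd

/-- Partial solution: `pSol y v n` carries the first `n` values of the solution (0 beyond). -/
def pSol {R : Type*} [CommRing R] (y : ℕ → R) (v : R) : ℕ → ℕ → R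
  | 0 => fun _ => 0
  | n + 1 => Function.update (pSol y v n) n (v ^ n * (y n - autOp (pSol y v n) n))

lemma pSol_stable {R : Type*} [CommRing R] (y : ℕ → R) (v : R) :
    ∀ n i, i < n → pSol y v n i = pSol y v (i + 1) i := by
  intro n
  induction n with
  | zero => intro i hi; omega
  | succ n ih =>
    intro i hi
    rcases eq_or_lt_of_le (Nat.lt_succ_iff.mp hi) with h | h
    · subst h; rfl
    · show Function.update (pSol y v n) n _ i = _
      rw [Function.update_of_ne (by omega), ih i h]

lemma pSol_zero {R : Type*} [CommRing R] (y : ℕ → R) (v : R) :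
    ∀ n i, n ≤ i → pSol y v n i = 0 := by
  intro n
  induction n with
  | zero => intro i _; rfl
  | succ n ih =>
    intro i hi
    show Function.update (pSol y v n) n _ i = 0
    rw [Function.update_of_ne (by omega)]
    exact ih i (by omega)


/-- Let `R` be an integral domain and `y` a sequence whose first term is a unit. Then there is a
unique sequence `x` with `𝔄(x) = y`, and this `x` satisfies `x(0) = y(0)` (in particular `x(0)`
is a unit): the autonomous operator restricts to a bijection of the set of sequences with unit
first term onto itself. -/
theorem autOp_bijective {R : Type*} [CommRing R] [IsDomain R] (y : ℕ → R)
    (hy : IsUnit (y 0)) :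
    (∃! x : ℕ → R, autOp x = y) ∧ (∀ x : ℕ → R, autOp x = y → x 0 = y 0) := by
  obtain ⟨v, hv⟩ : ∃ v, y 0 * v = 1 := hy.exists_right_inv
  set sol : ℕ → R := fun n => pSol y v (n + 1) n with hsol_def
  have autOp_zero : ∀ x : ℕ → R, autOp x 0 = x 0 := fun x => rfl
  -- sol 0 = y 0
  have hsol0 : sol 0 = y 0 := by
    show Function.update (pSol y v 0) 0 (v ^ 0 * (y 0 - autOp (pSol y v 0) 0)) 0 = y 0
    rw [Function.update_self]
    have : autOp (pSol y v 0) 0 = 0 := rfl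
    rw [this]; ring
  -- sol agrees with pSol y v n below n
  have hagree : ∀ n i, i < n → sol i = pSol y v n i := by
    intro n i hi
    show pSol y v (i + 1) i = pSol y v n i
    exact (pSol_stable y v n i hi).symm
  -- existence
  have hsol : autOp sol = y := by
    funext n
    have hd := DSeq_sub n 0 sol (pSol y v n)
        (fun i hi => hagree n i (by omega))
    rw [pSol_zero y v n (n + 0) (by omega)] at hd
    have hsn : sol (n + 0) = v ^ n * (y n - autOp (pSol y v n) n) := by
      show Function.update (pSol y v n) n _ (n + 0) = _
      simp
    rw [hsn, hsol0] at hd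
    have : autOp sol n - autOp (pSol y v n) n
        = y 0 ^ n * (v ^ n * (y n - autOp (pSol y v n) n)) := by
      simpa [autOp, autPoly, sub_zero] using hd
    have hpow : y 0 ^ n * v ^ n = 1 := by
      rw [← mul_pow, hv, one_pow]
    linear_combination this + (y n - autOp (pSol y v n) n) * hpow
  -- uniqueness
  have huniq : ∀ x : ℕ → R, autOp x = y → x = sol := by
    intro x hx
    have hx0 : x 0 = y 0 := by rw [← autOp_zero x, hx]
    funext n
    induction n using Nat.strong_induction_on with
    | _ n ih =>
      have hd := DSeq_sub n 0 x sol (fun i hi => ih i (by omega))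
      have hL : DSeq x n 0 - DSeq sol n 0 = 0 := by
        have h1 : DSeq x n 0 = y n := by
          have := congrFun hx n; simpa [autOp, autPoly] using this
        have h2 : DSeq sol n 0 = y n := by
          have := congrFun hsol n; simpa [autOp, autPoly] using this
        rw [h1, h2, sub_self]
      rw [hL, hx0] at hd
      have hpow : y 0 ^ n * v ^ n = 1 := by rw [← mul_pow, hv, one_pow]
      have := hd.symm
      have hcancel : x (n + 0) - sol (n + 0) = 0 := by
        calc x (n + 0) - sol (n + 0)
            = y 0 ^ n * v ^ n * (x (n + 0) - sol (n + 0)) := by rw [hpow, one_mul]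
          _ = v ^ n * (y 0 ^ n * (x (n + 0) - sol (n + 0))) := by ring
          _ = v ^ n * 0 := by rw [← this]
          _ = 0 := by ring
      have : x n - sol n = 0 := by simpa using hcancel
      exact sub_eq_zero.mp this
  refine ⟨⟨sol, hsol, huniq⟩, fun x hx => by rw [← autOp_zero x, hx]⟩
end

section
/- Let R be an integral domain which is a ℚ-algebra, let f ∈ R⟦X⟧ have zero constant coefficient, and let g := exp ∘ f ∈ R⟦X⟧ (the substitution of f into the exponential series, defined since f has zero constant term), whose multiplicative inverse is exp ∘ (−f). Then for every n ≥ 1, applying the autonomous polynomials over the ring R⟦X⟧ to the sequence Δg = (δ^j g)_{j≥0}: A_n(Δg) = g^n · A_n(Y), where Y : ℕ → R⟦X⟧ is the sequence Y(j) := (exp ∘ (−f)) · δ^j g. -/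
open PowerSeries

/-- Composition `g ∘ f` of formal power series; this is the substitution of `f` into `g`,
correct when `f` has zero constant coefficient. -/
noncomputable def psComp {R : Type*} [CommRing R] (g f : PowerSeries R) : PowerSeries R :=
  PowerSeries.mk fun n => ∑ k ∈ Finset.range (n + 1),
    PowerSeries.coeff k g * PowerSeries.coeff n (f ^ k)

/-!
`A_n` is homogeneous of degree `n`, so `A_n(Δg) = A_n(g · exp(-f) · Δg) = g^n A_n(Y)` as soon as
`exp ∘ f` and `exp ∘ (-f)` are mutually inverse. The latter follows from `exp(X) exp(-X) = 1`
because substituting `f` is a ring homomorphism.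
-/

section

variable {R : Type*} [CommRing R]

theorem DSeq_const_mul (c : R) (x : ℕ → R) (m n : ℕ) :
    DSeq (fun j => c * x j) m n = c ^ (m + 1) * DSeq x m n := by
  induction m generalizing n with
  | zero => simp [DSeq]
  | succ m ih =>
    simp only [DSeq, hconv, ih, Finset.mul_sum]
    exact Finset.sum_congr rfl fun _ _ => by ring

theorem autPoly_const_mul (c : R) (x : ℕ → R) {n : ℕ} (hn : n ≠ 0) :
    autPoly (fun j => c * x j) n = c ^ n * autPoly x n := by
  rw [autPoly, DSeq_const_mul, Nat.sub_add_cancel (Nat.one_le_iff_ne_zero.mpr hn), autPoly]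

theorem psComp_eq_subst (a : R⟦X⟧) {f : R⟦X⟧} (hf : constantCoeff f = 0) :
    psComp a f = a.subst f := by
  ext n
  rw [psComp, coeff_mk, coeff_subst' (HasSubst.of_constantCoeff_zero' hf)]
  refine (finsum_eq_sum_of_support_subset _ fun k hk => ?_).symm
  rw [Function.mem_support] at hk
  rw [Finset.mem_coe, Finset.mem_range]
  by_contra! hkn
  exact hk (by rw [coeff_of_lt_order n ((Nat.cast_lt.mpr hkn).trans_le
    (le_order_pow_of_constantCoeff_eq_zero k hf)), mul_zero])

theorem psComp_neg (a f : R⟦X⟧) : psComp a (-f) = psComp (rescale (-1 : R) a) f := by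
  ext n
  simp only [psComp, coeff_mk, coeff_rescale]
  refine Finset.sum_congr rfl fun k _ => ?_
  have hneg : (-f) ^ k = C ((-1 : R) ^ k) * f ^ k := by rw [neg_pow, map_pow, map_neg, map_one]
  rw [hneg, coeff_C_mul]
  ring

theorem psComp_exp_mul_psComp_exp_neg [Algebra ℚ R] {f : R⟦X⟧} (hf : constantCoeff f = 0) :
    psComp (exp R) f * psComp (exp R) (-f) = 1 := by
  have hsubst := HasSubst.of_constantCoeff_zero' hf
  have hexp : exp R * rescale (-1 : R) (exp R) = 1 := exp_mul_exp_neg_eq_one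
  rw [psComp_neg, psComp_eq_subst _ hf, psComp_eq_subst _ hf, ← subst_mul hsubst, hexp,
    ← coe_substAlgHom hsubst, map_one]

end

theorem autPoly_exp_comp_general {R : Type*} [CommRing R] [Algebra ℚ R]
    (f : PowerSeries R) (hf : PowerSeries.constantCoeff f = 0)
    (g : PowerSeries R) (hg : g = psComp (exp R) f) :
    g * psComp (exp R) (-f) = 1 ∧
    ∀ n : ℕ, 1 ≤ n →
      autPoly (fun j => derivativeFun^[j] g) n =
        g ^ n * autPoly (fun j => psComp (exp R) (-f) * derivativeFun^[j] g) n := by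
  have hinv : g * psComp (exp R) (-f) = 1 := hg ▸ psComp_exp_mul_psComp_exp_neg hf
  refine ⟨hinv, fun n hn => ?_⟩
  rw [autPoly_const_mul _ _ (Nat.one_le_iff_ne_zero.mp hn), ← mul_assoc, ← mul_pow, hinv,
    one_pow, one_mul]

/-- Let `R` be an integral domain which is a `ℚ`-algebra, `f ∈ R⟦X⟧` with zero constant
coefficient, and `g = exp ∘ f`, whose multiplicative inverse is `exp ∘ (-f)`. Then for every
`n ≥ 1`, applying the autonomous polynomials over `R⟦X⟧` to `Δg = (δ^j g)_j`:
`A_n(Δg) = g^n · A_n(Y)` where `Y(j) = (exp ∘ (-f)) · δ^j g`. -/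
theorem autPoly_exp_comp {R : Type*} [CommRing R] [IsDomain R] [Algebra ℚ R]
    (f : PowerSeries R) (hf : PowerSeries.constantCoeff f = 0)
    (g : PowerSeries R) (hg : g = psComp (exp R) f) :
    g * psComp (exp R) (-f) = 1 ∧
    ∀ n : ℕ, 1 ≤ n →
      autPoly (fun j => derivativeFun^[j] g) n =
        g ^ n * autPoly (fun j => psComp (exp R) (-f) * derivativeFun^[j] g) n :=
  autPoly_exp_comp_general f hf g hg
end
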